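/- arXiv:2304.02574 — 3 statements merged into one kernel-verified Lean document; each statement's English description precedes it below -/
import Mathlib

section
/- Let Z = (X,Y) and let W = ∏_{t=1}^H π(a_t|x_t)/π_b(a_t|x_t) be the trajectory-wise importance weight. Then the likelihood ratio w(x,y) = dP^π_{X,Y}/dP^{π_b}_{X,Y}(x,y) equals the conditional expectation E_{τ∼P^{π_b}}[W | X=x, Y=y], i.e., the importance weight of the observable (X,Y) is the conditional expectation of the trajectory importance weight. -/
open MeasureTheory

/-- The likelihood ratio of the observable `Z = (X,Y)` equals the conditional
expectation of the trajectory-wise importance weight `W`: if trajectories have law `P`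
under the behavior policy and the target-policy trajectory law is `W · P` (density `W`),
then the Radon–Nikodym derivative of the pushforward laws of `Z` satisfies
`d(Z_*(W·P))/d(Z_*P) ∘ Z = E_P[W | σ(Z)]` almost everywhere. -/
theorem stmt_4 {Ω S : Type*} [MeasurableSpace Ω] [MeasurableSpace S]
    (P : Measure Ω) [IsProbabilityMeasure P]
    (Z : Ω → S) (hZ : Measurable Z)
    (W : Ω → ℝ) (hWm : Measurable W) (hW0 : ∀ ω, 0 ≤ W ω)
    (hWint : Integrable W P) (hWmean : ∫ ω, W ω ∂P = 1) :
    (fun ω =>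
        ((Measure.map Z (P.withDensity (fun ω' => ENNReal.ofReal (W ω')))).rnDeriv
            (Measure.map Z P) (Z ω)).toReal)
      =ᵐ[P] P[W | MeasurableSpace.comap Z inferInstance] := by
  set f : Ω → ENNReal := fun ω' => ENNReal.ofReal (W ω') with hf
  have hfm : Measurable f := hWm.ennreal_ofReal
  have hfin : ∫⁻ ω, f ω ∂P < ⊤ := hWint.lintegral_lt_top
  haveI : IsFiniteMeasure (P.withDensity f) := isFiniteMeasure_withDensity hfin.ne
  haveI : IsFiniteMeasure (Measure.map Z (P.withDensity f)) :=
    Measure.isFiniteMeasure_map _ _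
  have hac : Measure.map Z (P.withDensity f) ≪ Measure.map Z P :=
    (withDensity_absolutelyContinuous P f).map hZ
  have hm : MeasurableSpace.comap Z inferInstance ≤ ‹MeasurableSpace Ω› := hZ.comap_le
  haveI : SigmaFinite (P.trim hm) := inferInstance
  -- the function g
  set g : Ω → ℝ := fun ω =>
    ((Measure.map Z (P.withDensity f)).rnDeriv (Measure.map Z P) (Z ω)).toReal with hg
  have hrm : Measurable fun s => ((Measure.map Z (P.withDensity f)).rnDeriv
      (Measure.map Z P) s).toReal :=
    (Measure.measurable_rnDeriv _ _).ennreal_toReal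
  have hgm : Measurable[MeasurableSpace.comap Z inferInstance] g :=
    hrm.comp (comap_measurable Z)
  have hgint : Integrable g P := by
    have h1 : Integrable (fun s => ((Measure.map Z (P.withDensity f)).rnDeriv
        (Measure.map Z P) s).toReal) (Measure.map Z P) :=
      Measure.integrable_toReal_rnDeriv
    exact (integrable_map_measure h1.aestronglyMeasurable hZ.aemeasurable).mp h1
  -- integral equality on preimages
  have key : ∀ t : Set S, MeasurableSet t →
      ∫ ω in Z ⁻¹' t, g ω ∂P = ∫ ω in Z ⁻¹' t, W ω ∂P := by
    intro t ht
    have h1 : ∫ ω in Z ⁻¹' t, g ω ∂P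
        = ∫ s in t, ((Measure.map Z (P.withDensity f)).rnDeriv (Measure.map Z P) s).toReal
            ∂(Measure.map Z P) := by
      rw [setIntegral_map ht hrm.aestronglyMeasurable hZ.aemeasurable]
    have h2 : ∫ s in t, ((Measure.map Z (P.withDensity f)).rnDeriv (Measure.map Z P) s).toReal
          ∂(Measure.map Z P)
        = ((Measure.map Z (P.withDensity f)) t).toReal :=
      Measure.setIntegral_toReal_rnDeriv hac t
    have h3 : (Measure.map Z (P.withDensity f)) t = ∫⁻ ω in Z ⁻¹' t, f ω ∂P := by
      rw [Measure.map_apply hZ ht, withDensity_apply _ (hZ ht)]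
    have h4 : ∫ ω in Z ⁻¹' t, W ω ∂P = (∫⁻ ω in Z ⁻¹' t, f ω ∂P).toReal := by
      rw [integral_eq_lintegral_of_nonneg_ae (Filter.Eventually.of_forall fun ω => hW0 ω)
        hWint.aestronglyMeasurable.restrict]
    rw [h1, h2, h3, h4]
  refine ae_eq_condExp_of_forall_setIntegral_eq hm hWint
    (fun s hs _ => hgint.integrableOn) ?_ ?_
  · rintro s ⟨t, ht, rfl⟩ _
    exact key t ht
  · exact ⟨g, hgm.stronglyMeasurable, Filter.EventuallyEq.refl _ _⟩
end

section
/- Under the setup of the empirical weight estimator (i.i.d. samples in [m,M], finite 𝒳×𝒴), the quantity Δ_w = (1/2) E[|ŵ(X,Y) − w(X,Y)|] satisfies Δ_w ≤ (M−m)·|𝒳|·|𝒴|·√π / (2√(2·min_{x,y} N(x,y))), obtained by integrating the Hoeffding tail bound: E[|ŵ−w|] ≤ 2|𝒳||𝒴| ∫₀^∞ exp(−2ε²N/(M−m)²) dε = (M−m)|𝒳||𝒴|√π / √(2N) with N = min N(x,y). -/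
open MeasureTheory ProbabilityTheory Finset

/-!
Each empirical weight `ŵ(x,y)` is the mean of `N(x,y) ≥ N` independent samples with values in
`[m, M]`, so its variance is at most `(M - m)² / (4 N)`, and by Cauchy–Schwarz
`E|ŵ(x,y) - w(x,y)| ≤ (M - m) / (2 √N)`. Whatever the random pair `(X, Y)` is,
`|ŵ(X,Y) - w(X,Y)|` is dominated by the sum of these deviations over all pairs `(x, y)`,
which gives `E|ŵ(X,Y) - w(X,Y)| ≤ |𝒳| |𝒴| (M - m) / (2 √N)`. This is sharper than the bound
`(M - m) |𝒳| |𝒴| √π / √(2N)` obtained by integrating Hoeffding's tail, since `√2 ≤ 2 √π`.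
-/

section SampleMean

variable {Ω ι : Type*} [MeasurableSpace Ω] {μ : Measure Ω}

lemma integral_abs_sub_integral_le_sqrt_variance [IsProbabilityMeasure μ] {X : Ω → ℝ}
    (hX : MemLp X 2 μ) : ∫ ω, |X ω - μ[X]| ∂μ ≤ √(variance X μ) := by
  have hdev : MemLp (fun ω => |X ω - μ[X]|) 2 μ :=
    (hX.sub (memLp_const μ[X])).norm
  have hsq : μ[(fun ω => |X ω - μ[X]|) ^ 2] = variance X μ := by
    simp only [variance_eq_integral hX.aemeasurable, Pi.pow_apply, sq_abs]
  have hvar := variance_nonneg (fun ω => |X ω - μ[X]|) μ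
  rw [variance_eq_sub hdev, hsq] at hvar
  exact Real.le_sqrt_of_sq_le (by linarith)

variable [Fintype ι]

noncomputable def sampleMean (X : ι → Ω → ℝ) (ω : Ω) : ℝ :=
  (Fintype.card ι : ℝ)⁻¹ * ∑ i, X i ω

variable {X : ι → Ω → ℝ} {m M : ℝ}

lemma memLp_sampleMean {p : ENNReal} (hX : ∀ i, MemLp (X i) p μ) :
    MemLp (sampleMean X) p μ := by
  have hsum : MemLp (fun ω => ∑ i, X i ω) p μ := memLp_finsetSum _ fun i _ => hX i
  exact hsum.const_mul _

lemma integral_sampleMean [Nonempty ι] {a : ℝ} (hX : ∀ i, Integrable (X i) μ)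
    (hmean : ∀ i, μ[X i] = a) : μ[sampleMean X] = a := by
  have hcard : (Fintype.card ι : ℝ) ≠ 0 := by simp
  simp only [sampleMean, integral_const_mul, integral_finsetSum _ fun i _ => hX i, hmean,
    sum_const, card_univ, nsmul_eq_mul]
  field_simp

lemma variance_sampleMean_le [IsProbabilityMeasure μ] (hXm : ∀ i, AEMeasurable (X i) μ)
    (hind : iIndepFun X μ) (hbdd : ∀ i, ∀ᵐ ω ∂μ, X i ω ∈ Set.Icc m M) :
    variance (sampleMean X) μ ≤ ((M - m) / 2) ^ 2 / Fintype.card ι := by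
  set n : ℝ := (Fintype.card ι : ℝ)
  have hL2 : ∀ i, MemLp (X i) 2 μ := fun i =>
    memLp_of_bounded (hbdd i) (hXm i).aestronglyMeasurable 2
  have hsum : variance (∑ i, X i) μ = ∑ i, variance (X i) μ :=
    IndepFun.variance_sum (fun i _ => hL2 i) fun i _ j _ hij => hind.indepFun hij
  have hsampleMean : sampleMean X = fun ω => n⁻¹ * (∑ i, X i) ω := by
    funext ω; simp only [sampleMean, Finset.sum_apply, n]
  have hn : n⁻¹ ^ 2 * n = n⁻¹ := by
    rcases eq_or_ne n 0 with h | h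
    · simp [h]
    · field_simp
  calc variance (sampleMean X) μ = n⁻¹ ^ 2 * ∑ i, variance (X i) μ := by
        rw [hsampleMean, variance_const_mul, hsum]
    _ ≤ n⁻¹ ^ 2 * ∑ _i : ι, ((M - m) / 2) ^ 2 := by
        gcongr with i
        exact variance_le_sq_of_bounded (hbdd i) (hXm i)
    _ = ((M - m) / 2) ^ 2 / n := by
        rw [sum_const, card_univ, nsmul_eq_mul, ← mul_assoc, hn, inv_mul_eq_div]

lemma integral_abs_sampleMean_sub_le [IsProbabilityMeasure μ] [Nonempty ι] {a : ℝ}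
    (hmM : m ≤ M) (hXm : ∀ i, AEMeasurable (X i) μ) (hind : iIndepFun X μ)
    (hbdd : ∀ i, ∀ᵐ ω ∂μ, X i ω ∈ Set.Icc m M) (hmean : ∀ i, μ[X i] = a) :
    ∫ ω, |sampleMean X ω - a| ∂μ ≤ (M - m) / (2 * √(Fintype.card ι)) := by
  have hL2 : ∀ i, MemLp (X i) 2 μ := fun i =>
    memLp_of_bounded (hbdd i) (hXm i).aestronglyMeasurable 2
  have hmean_eq := integral_sampleMean (fun i => (hL2 i).integrable one_le_two) hmean
  calc ∫ ω, |sampleMean X ω - a| ∂μ ≤ √(variance (sampleMean X) μ) :=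
        hmean_eq ▸ integral_abs_sub_integral_le_sqrt_variance (memLp_sampleMean hL2)
    _ ≤ √(((M - m) / 2) ^ 2 / Fintype.card ι) :=
        Real.sqrt_le_sqrt (variance_sampleMean_le hXm hind hbdd)
    _ = (M - m) / (2 * √(Fintype.card ι)) := by
        rw [Real.sqrt_div (sq_nonneg _), Real.sqrt_sq (by linarith), div_div]

end SampleMean

lemma integral_comp_le_sum_integral {Ω κ : Type*} [MeasurableSpace Ω] {μ : Measure Ω}
    [Fintype κ] {f : κ → Ω → ℝ} (hf : ∀ k, Integrable (f k) μ) (hf0 : ∀ k ω, 0 ≤ f k ω)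
    (K : Ω → κ) : ∫ ω, f (K ω) ω ∂μ ≤ ∑ k, ∫ ω, f k ω ∂μ :=
  calc ∫ ω, f (K ω) ω ∂μ ≤ ∫ ω, ∑ k, f k ω ∂μ :=
        integral_mono_of_nonneg (ae_of_all _ fun ω => hf0 _ ω)
          (integrable_finsetSum _ fun k _ => hf k)
          (ae_of_all _ fun ω => single_le_sum (fun k _ => hf0 k ω) (mem_univ (K ω)))
    _ = ∑ k, ∫ ω, f k ω ∂μ := integral_finsetSum _ fun k _ => hf k

lemma div_two_mul_sqrt_le_mul_sqrt_pi_div {c n : ℝ} (hc : 0 ≤ c) :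
    c / (2 * √n) ≤ c * √Real.pi / √(2 * n) := by
  have hpi : √2 ≤ 2 * √Real.pi := by
    nlinarith [Real.sqrt_le_sqrt Real.two_le_pi, Real.sqrt_nonneg Real.pi]
  have hfactor : 1 / 2 ≤ √Real.pi / √2 := by
    rw [le_div_iff₀ (by positivity)]
    linarith
  calc c / (2 * √n) = c * (1 / 2) / √n := by ring
    _ ≤ c * (√Real.pi / √2) / √n := by gcongr
    _ = c * √Real.pi / √(2 * n) := by rw [Real.sqrt_mul zero_le_two]; ring

theorem stmt_7_general {Ω 𝒳 𝒴 : Type*} [MeasurableSpace Ω] [Fintype 𝒳] [Fintype 𝒴]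
    (μ : Measure Ω) [IsProbabilityMeasure μ]
    (m M : ℝ) (hmM : m ≤ M)
    (N : 𝒳 → 𝒴 → ℕ) (Nmin : ℕ) (hNmin : 0 < Nmin) (hNle : ∀ x y, Nmin ≤ N x y)
    (W : (x : 𝒳) → (y : 𝒴) → Fin (N x y) → Ω → ℝ)
    (hWmeas : ∀ x y i, Measurable (W x y i))
    (hbdd : ∀ x y i ω, W x y i ω ∈ Set.Icc m M)
    (w : 𝒳 → 𝒴 → ℝ) (hmean : ∀ x y i, ∫ ω, W x y i ω ∂μ = w x y)
    (hindep : ∀ x y, iIndepFun (W x y) μ)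
    (XY : Ω → 𝒳 × 𝒴)
    (what : 𝒳 → 𝒴 → Ω → ℝ)
    (hwhat : ∀ x y ω, what x y ω = (1 / (N x y : ℝ)) * ∑ i : Fin (N x y), W x y i ω) :
    (1 / 2) * ∫ ω, |what (XY ω).1 (XY ω).2 ω - w (XY ω).1 (XY ω).2| ∂μ ≤
      (M - m) * (Fintype.card 𝒳 : ℝ) * (Fintype.card 𝒴 : ℝ) * Real.sqrt Real.pi /
        (2 * Real.sqrt (2 * (Nmin : ℝ))) := by
  have hwhat_eq : ∀ x y, what x y = sampleMean (W x y) := fun x y => by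
    funext ω; simp [hwhat, sampleMean]
  have hL2 : ∀ x y i, MemLp (W x y i) 2 μ := fun x y i =>
    memLp_of_bounded (ae_of_all _ (hbdd x y i)) (hWmeas x y i).aestronglyMeasurable 2
  have hint : ∀ p : 𝒳 × 𝒴, Integrable (fun ω => |what p.1 p.2 ω - w p.1 p.2|) μ := by
    rintro ⟨x, y⟩
    rw [hwhat_eq]
    exact (((memLp_sampleMean (hL2 x y)).integrable one_le_two).sub (integrable_const _)).abs
  have hpair : ∀ p : 𝒳 × 𝒴,
      ∫ ω, |what p.1 p.2 ω - w p.1 p.2| ∂μ ≤ (M - m) / (2 * √Nmin) := by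
    rintro ⟨x, y⟩
    have : Nonempty (Fin (N x y)) := ⟨⟨0, hNmin.trans_le (hNle x y)⟩⟩
    calc ∫ ω, |what x y ω - w x y| ∂μ ≤ (M - m) / (2 * √(N x y)) := by
          simpa [hwhat_eq] using integral_abs_sampleMean_sub_le hmM
            (fun i => (hWmeas x y i).aemeasurable) (hindep x y)
            (fun i => ae_of_all _ (hbdd x y i)) (hmean x y)
      _ ≤ (M - m) / (2 * √Nmin) := by
          gcongr
          exact hNle x y
  calc (1 / 2) * ∫ ω, |what (XY ω).1 (XY ω).2 ω - w (XY ω).1 (XY ω).2| ∂μ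
      ≤ (1 / 2) * ∑ p : 𝒳 × 𝒴, ∫ ω, |what p.1 p.2 ω - w p.1 p.2| ∂μ := by
        gcongr
        exact integral_comp_le_sum_integral hint (fun _ _ => abs_nonneg _) XY
    _ ≤ (1 / 2) * (Fintype.card 𝒳 * Fintype.card 𝒴 * ((M - m) / (2 * √Nmin))) := by
        gcongr
        simpa [Fintype.card_prod] using sum_le_sum fun p (_ : p ∈ univ) => hpair p
    _ ≤ (1 / 2) *
          (Fintype.card 𝒳 * Fintype.card 𝒴 * ((M - m) * √Real.pi / √(2 * Nmin))) := by
        gcongr _ * (_ * ?_)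
        exact div_two_mul_sqrt_le_mul_sqrt_pi_div (sub_nonneg.2 hmM)
    _ = _ := by ring

/-- For the empirical weight estimator (for each `(x,y)` in a finite set `𝒳 × 𝒴`,
`ŵ(x,y)` is the mean of `N(x,y)` i.i.d. samples bounded in `[m,M]` with mean `w(x,y)`),
and any random pair `(X,Y)` independent of the samples, the quantity
`Δ_w = (1/2) E[|ŵ(X,Y) - w(X,Y)|]` satisfies
`Δ_w ≤ (M-m)·|𝒳|·|𝒴|·√π / (2·√(2·N_min))` where `N_min = min_{x,y} N(x,y)`. -/
theorem stmt_7 {Ω 𝒳 𝒴 : Type*} [MeasurableSpace Ω] [Fintype 𝒳] [Fintype 𝒴]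
    [MeasurableSpace 𝒳] [MeasurableSpace 𝒴]
    (μ : Measure Ω) [IsProbabilityMeasure μ]
    (m M : ℝ) (hmM : m ≤ M)
    (N : 𝒳 → 𝒴 → ℕ) (Nmin : ℕ) (hNmin : 0 < Nmin) (hNle : ∀ x y, Nmin ≤ N x y)
    (W : (x : 𝒳) → (y : 𝒴) → Fin (N x y) → Ω → ℝ)
    (hWmeas : ∀ x y i, Measurable (W x y i))
    (hbdd : ∀ x y i ω, W x y i ω ∈ Set.Icc m M)
    (w : 𝒳 → 𝒴 → ℝ) (hmean : ∀ x y i, ∫ ω, W x y i ω ∂μ = w x y)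
    (hindep : ∀ x y, iIndepFun (W x y) μ)
    (XY : Ω → 𝒳 × 𝒴) (hXY : Measurable XY)
    (hXYindep : IndepFun XY (fun ω => fun x y (i : Fin (N x y)) => W x y i ω) μ)
    (what : 𝒳 → 𝒴 → Ω → ℝ)
    (hwhat : ∀ x y ω, what x y ω = (1 / (N x y : ℝ)) * ∑ i : Fin (N x y), W x y i ω) :
    (1 / 2) * ∫ ω, |what (XY ω).1 (XY ω).2 ω - w (XY ω).1 (XY ω).2| ∂μ ≤
      (M - m) * (Fintype.card 𝒳 : ℝ) * (Fintype.card 𝒴 : ℝ) * Real.sqrt Real.pi /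
        (2 * Real.sqrt (2 * (Nmin : ℝ))) :=
  stmt_7_general μ m M hmM N Nmin hNmin hNle W hWmeas hbdd w hmean hindep XY what hwhat
end

section
/- Let Z₁,...,Z_{n+1} be independent with Z₁,...,Z_n ∼ P and Z_{n+1} ∼ Q where dQ/dP = w. Then for any fixed values z₁,...,z_{n+1}, the conditional probability that Z_{n+1} = z_i given the unordered set {Z₁,...,Z_{n+1}} = {z₁,...,z_{n+1}} (all values distinct) equals w(z_i)/∑_{j=1}^{n+1} w(z_j). -/
open MeasureTheory ProbabilityTheory Finset

private lemma measure_finset_eq_sum {α : Type*} [MeasurableSpace α] [MeasurableSingletonClass α]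
    (μ : Measure α) (s : Finset α) : μ ↑s = ∑ x ∈ s, μ {x} := by
  rw [show (↑s : Set α) = ⋃ x ∈ s, {x} by ext y; simp]
  exact measure_biUnion_finset (fun a _ b _ hab => by simp [Set.disjoint_singleton, hab])
    fun b _ => measurableSet_singleton b

/-- Weighted exchangeability: let `Z₁,…,Z_n ∼ P` i.i.d. and `Z_{n+1} ∼ Q` independent,
where `dQ/dP = w` (so that the joint law of `(Z₁,…,Z_{n+1})` is the product `P^{⊗(n+1)}`
with density `w` applied to the last coordinate). Then for distinct atoms `z₁,…,z_{n+1}`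
of positive `P`-mass, the conditional probability that `Z_{n+1} = z_i` given the
unordered set `{Z₁,…,Z_{n+1}} = {z₁,…,z_{n+1}}` equals `w(z_i) / ∑_j w(z_j)`. -/
theorem stmt_17 {Z : Type*} [MeasurableSpace Z] [MeasurableSingletonClass Z] [Countable Z]
    (n : ℕ) (P : Measure Z) [IsProbabilityMeasure P]
    (w : Z → ℝ) (hwm : Measurable w) (hw0 : ∀ x, 0 ≤ w x)
    (z : Fin (n + 1) → Z) (hinj : Function.Injective z)
    (hatom : ∀ j, P {z j} ≠ 0) (hwz : ∀ j, 0 < w (z j))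
    (μ : Measure (Fin (n + 1) → Z))
    (hμ : μ = (Measure.pi fun _ : Fin (n + 1) => P).withDensity
      (fun ω => ENNReal.ofReal (w (ω (Fin.last n)))))
    (E : Set (Fin (n + 1) → Z))
    (hEdef : E = {ω | ∃ σ : Equiv.Perm (Fin (n + 1)), ω = z ∘ σ})
    (i : Fin (n + 1)) :
    ((μ[|E]) {ω | ω (Fin.last n) = z i}).toReal = w (z i) / ∑ j, w (z j) := by
  classical
  set C : ENNReal := ∏ j, P {z j} with hC
  -- singleton measure
  have hsing : ∀ a : Fin (n+1) → Z,
      μ {a} = ENNReal.ofReal (w (a (Fin.last n))) * ∏ j, P {a j} := by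
    intro a
    rw [hμ, withDensity_apply _ (measurableSet_singleton a), lintegral_singleton]
    congr 1
    rw [show {a} = Set.univ.pi (fun j => {a j}) by ext x; simp [funext_iff], Measure.pi_pi]
  have hsingσ : ∀ σ : Equiv.Perm (Fin (n+1)),
      μ {z ∘ σ} = ENNReal.ofReal (w (z (σ (Fin.last n)))) * C := by
    intro σ
    rw [hsing]
    congr 1
    exact Equiv.prod_comp σ (fun j => P {z j})
  have hzinj : Function.Injective (fun σ : Equiv.Perm (Fin (n+1)) => z ∘ σ) := by
    intro σ τ h
    exact Equiv.ext fun x => hinj (congrFun h x)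
  -- E as a finset image
  have hE : E = ↑((univ : Finset (Equiv.Perm (Fin (n+1)))).image (fun σ : Equiv.Perm (Fin (n+1)) => z ∘ ⇑σ)) := by
    rw [hEdef]; ext ω; simp [eq_comm, Set.mem_setOf_eq]
  have hEA : E ∩ {ω | ω (Fin.last n) = z i}
      = ↑((univ.filter (fun σ : Equiv.Perm (Fin (n+1)) => σ (Fin.last n) = i)).image
          (fun σ : Equiv.Perm (Fin (n+1)) => z ∘ ⇑σ)) := by
    rw [hEdef]; ext ω
    simp only [Set.mem_inter_iff, Set.mem_setOf_eq, coe_image, Set.mem_image, mem_coe,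
      mem_filter, mem_univ, true_and]
    constructor
    · rintro ⟨⟨σ, rfl⟩, h⟩
      exact ⟨σ, hinj h, rfl⟩
    · rintro ⟨σ, hσ, rfl⟩
      exact ⟨⟨σ, rfl⟩, by simp [hσ]⟩
  -- measures of finset-coe sets
  have hμE : μ E = (∑ σ : Equiv.Perm (Fin (n+1)),
      ENNReal.ofReal (w (z (σ (Fin.last n))))) * C := by
    rw [hE, measure_finset_eq_sum, Finset.sum_image (fun a _ b _ h => hzinj h)]
    rw [Finset.sum_mul]
    exact Finset.sum_congr rfl fun σ _ => hsingσ σ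
  set N : ℕ := (univ.filter (fun σ : Equiv.Perm (Fin (n+1)) => σ (Fin.last n) = i)).card with hN
  have hμEA : μ (E ∩ {ω | ω (Fin.last n) = z i})
      = (N : ENNReal) * (ENNReal.ofReal (w (z i)) * C) := by
    rw [hEA, measure_finset_eq_sum, Finset.sum_image (fun a _ b _ h => hzinj h)]
    rw [Finset.sum_congr rfl (fun σ hσ => by
      rw [hsingσ σ, (mem_filter.1 hσ).2]), Finset.sum_const, nsmul_eq_mul]
  -- fibers all have the same card N
  have hfib : ∀ j : Fin (n+1),
      (univ.filter (fun σ : Equiv.Perm (Fin (n+1)) => σ (Fin.last n) = j)).card = N := by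
    intro j
    apply Finset.card_bij (fun σ _ => Equiv.swap j i * σ)
    · intro σ hσ
      simp only [mem_filter, mem_univ, true_and] at hσ ⊢
      simp [Equiv.Perm.mul_apply, hσ]
    · intro σ hσ τ hτ h
      exact mul_left_cancel h
    · intro τ hτ
      refine ⟨Equiv.swap j i * τ, ?_, ?_⟩
      · simp only [mem_filter, mem_univ, true_and] at hτ ⊢
        simp [Equiv.Perm.mul_apply, hτ]
      · rw [← mul_assoc, Equiv.swap_mul_self, one_mul]
  -- group the big sum by fibers
  have hsum : (∑ σ : Equiv.Perm (Fin (n+1)), ENNReal.ofReal (w (z (σ (Fin.last n)))))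
      = (N : ENNReal) * ∑ j, ENNReal.ofReal (w (z j)) := by
    rw [← Finset.sum_fiberwise univ (fun σ : Equiv.Perm (Fin (n+1)) => σ (Fin.last n))
      (fun σ => ENNReal.ofReal (w (z (σ (Fin.last n)))))]
    rw [Finset.mul_sum]
    refine Finset.sum_congr rfl fun j _ => ?_
    rw [Finset.sum_congr rfl (fun σ hσ => by rw [(mem_filter.1 hσ).2]),
      Finset.sum_const, nsmul_eq_mul, hfib j]
  -- nonzero / finite facts
  have hC0 : C ≠ 0 := by
    rw [hC]; exact Finset.prod_ne_zero_iff.2 fun j _ => hatom j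
  have hCt : C ≠ ⊤ := by
    rw [hC]
    exact (ENNReal.prod_lt_top fun j _ => measure_lt_top P _).ne
  have hN0 : N ≠ 0 := by
    rw [hN]
    exact Finset.card_ne_zero.2 ⟨Equiv.swap (Fin.last n) i, by simp⟩
  have hS0 : (0:ℝ) < ∑ j, w (z j) :=
    Finset.sum_pos (fun j _ => hwz j) ⟨i, mem_univ i⟩
  have hSsum : (∑ j, ENNReal.ofReal (w (z j))) = ENNReal.ofReal (∑ j, w (z j)) :=
    (ENNReal.ofReal_sum_of_nonneg fun j _ => hw0 _).symm
  have hEmeas : MeasurableSet E := by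
    rw [hE]; exact Set.Countable.measurableSet (Finset.countable_toSet _)
  rw [cond_apply hEmeas, hμEA, hμE, hsum, hSsum]
  rw [ENNReal.toReal_mul, ENNReal.toReal_mul, ENNReal.toReal_mul, ENNReal.toReal_inv,
    ENNReal.toReal_mul, ENNReal.toReal_mul]
  rw [ENNReal.toReal_ofReal (hw0 _), ENNReal.toReal_ofReal hS0.le]
  simp only [ENNReal.toReal_natCast]
  have hCr : (0:ℝ) < C.toReal := ENNReal.toReal_pos hC0 hCt
  have hNr : (0:ℝ) < (N:ℝ) := by positivity
  field_simp
end
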